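/- Let (M, g, (φ_i, ξ_i, η_i)_{i=1,2,3}) be a 3-cosymplectic manifold with underlying cosymplectic structures (η_i, ω_i), carrying an action of a Lie group G that is Hamiltonian with respect to each (η_i, ω_i) with moment maps μ_i : M → 𝔤*. Let ζ₂, ζ₃ ∈ 𝔤* be regular values of μ₂, μ₃ respectively, and suppose the submanifolds μ₂⁻¹(ζ₂) and μ₃⁻¹(ζ₃) intersect transversally. Then N := μ₂⁻¹(ζ₂) ∩ μ₃⁻¹(ζ₃) is an almost contact submanifold of (M, φ₁, ξ₁, η₁): ξ₁ is tangent to N and φ₁(TN) ⊂ TN. -/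

import Mathlib

/-!
# An abstract framework for smooth differential geometry

A smooth manifold is modelled by a carrier type `M` together with a family of real vector
spaces `T x` (the tangent spaces) and a `SmoothCalculus`, which provides the smoothness
predicates, the differentials of smooth functions and the Lie bracket of smooth vector
fields, subject to the usual rules of calculus.  Differential forms, Riemannian metrics and
endomorphism fields are given pointwise; closedness of forms is expressed through the
classical global (Koszul) formulas for the exterior derivative, Lie derivatives of forms
through the corresponding global formulas, and nondegeneracy conditions through the
canonical "flat" musical maps.  Lie group actions come with the data of their pointwise
differentials, the adjoint representation and the fundamental vector fields.
-/

set_option autoImplicit false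
set_option maxHeartbeats 1000000

noncomputable section

/-- Calculus data on an abstract smooth manifold: the carrier `M`, the tangent spaces `T x`,
smoothness predicates, the differential `d` of functions and the Lie bracket of vector
fields, subject to the usual rules of calculus. -/
structure SmoothCalculus (M : Type*) (T : M → Type*)
    [∀ x, AddCommGroup (T x)] [∀ x, Module ℝ (T x)] where
  /-- smooth real valued functions -/
  IsSmoothFun : (M → ℝ) → Prop
  /-- smooth vector fields -/
  IsSmoothVF : (∀ x, T x) → Prop
  /-- smooth 1-forms -/
  IsSmoothOneForm : (∀ x, T x → ℝ) → Prop
  /-- smooth 2-tensors -/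
  IsSmoothTwoTensor : (∀ x, T x → T x → ℝ) → Prop
  /-- smooth endomorphism fields -/
  IsSmoothEnd : (∀ x, T x → T x) → Prop
  /-- the differential of a smooth function -/
  d : (M → ℝ) → ∀ x, T x → ℝ
  /-- the Lie bracket of vector fields -/
  bracket : (∀ x, T x) → (∀ x, T x) → ∀ x, T x
  d_linear : ∀ (f : M → ℝ) (x : M), IsLinearMap ℝ (d f x)
  d_const : ∀ (c : ℝ) (x : M) (v : T x), d (fun _ => c) x v = 0
  d_add : ∀ (f g : M → ℝ) (x : M) (v : T x),
    d (fun y => f y + g y) x v = d f x v + d g x v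
  d_mul : ∀ (f g : M → ℝ) (x : M) (v : T x),
    d (fun y => f y * g y) x v = f x * d g x v + g x * d f x v
  bracket_antisymm : ∀ (X Y : ∀ x, T x) (x : M), bracket X Y x = - bracket Y X x
  bracket_smooth : ∀ X Y, IsSmoothVF X → IsSmoothVF Y → IsSmoothVF (bracket X Y)
  deriv_smooth : ∀ (f : M → ℝ) (X : ∀ x, T x), IsSmoothFun f → IsSmoothVF X →
    IsSmoothFun fun x => d f x (X x)

namespace SmoothCalculus

variable {M : Type*} {T : M → Type*} [∀ x, AddCommGroup (T x)] [∀ x, Module ℝ (T x)]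

/-- The exterior derivative `dη(X,Y)` of a 1-form, with the classical convention
`dη(X,Y) = ½ (X η(Y) − Y η(X) − η([X,Y]))`. -/
def extDerivOne (C : SmoothCalculus M T) (η : ∀ x, T x → ℝ) (X Y : ∀ x, T x) (x : M) : ℝ :=
  (C.d (fun y => η y (Y y)) x (X x) - C.d (fun y => η y (X y)) x (Y x)
      - η x (C.bracket X Y x)) / 2

/-- A 1-form is closed: `dη = 0`. -/
def IsClosedOneForm (C : SmoothCalculus M T) (η : ∀ x, T x → ℝ) : Prop :=
  ∀ X Y, C.IsSmoothVF X → C.IsSmoothVF Y → ∀ x, C.extDerivOne η X Y x = 0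

/-- The exterior derivative `dω(X,Y,Z)` of a 2-form (global Koszul formula, up to an
irrelevant positive constant factor). -/
def extDerivTwo (C : SmoothCalculus M T) (ω : ∀ x, T x → T x → ℝ)
    (X Y Z : ∀ x, T x) (x : M) : ℝ :=
  C.d (fun y => ω y (Y y) (Z y)) x (X x)
    - C.d (fun y => ω y (X y) (Z y)) x (Y x)
    + C.d (fun y => ω y (X y) (Y y)) x (Z x)
    - ω x (C.bracket X Y x) (Z x)
    + ω x (C.bracket X Z x) (Y x)
    - ω x (C.bracket Y Z x) (X x)

/-- A 2-form is closed: `dω = 0`. -/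
def IsClosedTwoForm (C : SmoothCalculus M T) (ω : ∀ x, T x → T x → ℝ) : Prop :=
  ∀ X Y Z, C.IsSmoothVF X → C.IsSmoothVF Y → C.IsSmoothVF Z → ∀ x,
    C.extDerivTwo ω X Y Z x = 0

/-- The Nijenhuis tensor `N_φ(X,Y) = φ²[X,Y] + [φX,φY] − φ[φX,Y] − φ[X,φY]` of an
endomorphism field `φ`. -/
def nijenhuis (C : SmoothCalculus M T) (φ : ∀ x, T x → T x) (X Y : ∀ x, T x) :
    ∀ x, T x := fun x =>
  φ x (φ x (C.bracket X Y x))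
    + C.bracket (fun y => φ y (X y)) (fun y => φ y (Y y)) x
    - φ x (C.bracket (fun y => φ y (X y)) Y x)
    - φ x (C.bracket X (fun y => φ y (Y y)) x)

end SmoothCalculus

section Structures

variable {M : Type*} {T : M → Type*} [∀ x, AddCommGroup (T x)] [∀ x, Module ℝ (T x)]

/-- A cosymplectic structure `(η, ω)`: a 1-form and a 2-form, with `η ∧ ωⁿ ≠ 0`
(expressed, as in Albert's paper, by the existence of the Reeb vector and the bijectivity
of the musical map `♭(X) = ι_X ω + η(X) η`), both closed. -/
structure IsCosymplectic (C : SmoothCalculus M T)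
    (η : ∀ x, T x → ℝ) (ω : ∀ x, T x → T x → ℝ) : Prop where
  eta_linear : ∀ x, IsLinearMap ℝ (η x)
  eta_smooth : C.IsSmoothOneForm η
  omega_linear_left : ∀ (x : M) (w : T x), IsLinearMap ℝ fun v => ω x v w
  omega_linear_right : ∀ (x : M) (v : T x), IsLinearMap ℝ (ω x v)
  omega_alt : ∀ (x : M) (v w : T x), ω x v w = - ω x w v
  omega_smooth : C.IsSmoothTwoTensor ω
  reeb_exists : ∀ x : M, ∃ v : T x, η x v = 1 ∧ ∀ w, ω x v w = 0
  flat_injective : ∀ (x : M) (v v' : T x),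
    (∀ w, ω x v w + η x v * η x w = ω x v' w + η x v' * η x w) → v = v'
  flat_surjective : ∀ (x : M) (ℓ : T x →ₗ[ℝ] ℝ),
    ∃ v, ∀ w, ω x v w + η x v * η x w = ℓ w
  closed_eta : C.IsClosedOneForm η
  closed_omega : C.IsClosedTwoForm ω

/-- The Reeb vector field of an (almost) cosymplectic structure:
`ω(ξ, −) = 0` and `η(ξ) = 1`. -/
def IsReebField (C : SmoothCalculus M T) (η : ∀ x, T x → ℝ) (ω : ∀ x, T x → T x → ℝ)
    (ξ : ∀ x, T x) : Prop :=
  C.IsSmoothVF ξ ∧ (∀ x, η x (ξ x) = 1) ∧ ∀ (x : M) (w : T x), ω x (ξ x) w = 0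

/-- A symplectic structure: a nondegenerate closed 2-form. -/
structure IsSymplectic (C : SmoothCalculus M T) (ω : ∀ x, T x → T x → ℝ) : Prop where
  omega_linear_left : ∀ (x : M) (w : T x), IsLinearMap ℝ fun v => ω x v w
  omega_linear_right : ∀ (x : M) (v : T x), IsLinearMap ℝ (ω x v)
  omega_alt : ∀ (x : M) (v w : T x), ω x v w = - ω x w v
  omega_smooth : C.IsSmoothTwoTensor ω
  nondeg_injective : ∀ (x : M) (v v' : T x), (∀ w, ω x v w = ω x v' w) → v = v'
  nondeg_surjective : ∀ (x : M) (ℓ : T x →ₗ[ℝ] ℝ), ∃ v, ∀ w, ω x v w = ℓ w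
  closed_omega : C.IsClosedTwoForm ω

/-- A Riemannian metric. -/
structure IsMetric (C : SmoothCalculus M T) (g : ∀ x, T x → T x → ℝ) : Prop where
  linear_left : ∀ (x : M) (w : T x), IsLinearMap ℝ fun v => g x v w
  linear_right : ∀ (x : M) (v : T x), IsLinearMap ℝ (g x v)
  symm : ∀ (x : M) (v w : T x), g x v w = g x w v
  posdef : ∀ (x : M) (v : T x), v ≠ 0 → 0 < g x v v
  smooth : C.IsSmoothTwoTensor g

/-- The fundamental 2-form `ω(X, Y) = g(X, φY)` associated to a metric and an
endomorphism field (for Kähler structures this is the Kähler form `Ω(X,Y) = h(X,JY)`). -/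
def acmForm (g : ∀ x, T x → T x → ℝ) (φ : ∀ x, T x → T x) : ∀ x, T x → T x → ℝ :=
  fun x v w => g x v (φ x w)

/-- An almost contact metric structure `(g, φ, ξ, η)`:
`φ² = −id + η ⊗ ξ`, `η(ξ) = 1` and `g(φX, φY) = g(X,Y) − η(X)η(Y)`. -/
structure IsAlmostContactMetric (C : SmoothCalculus M T) (g : ∀ x, T x → T x → ℝ)
    (φ : ∀ x, T x → T x) (ξ : ∀ x, T x) (η : ∀ x, T x → ℝ) : Prop where
  metric : IsMetric C g
  phi_linear : ∀ x, IsLinearMap ℝ (φ x)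
  phi_smooth : C.IsSmoothEnd φ
  xi_smooth : C.IsSmoothVF ξ
  eta_linear : ∀ x, IsLinearMap ℝ (η x)
  eta_smooth : C.IsSmoothOneForm η
  phi_sq : ∀ (x : M) (v : T x), φ x (φ x v) = - v + η x v • ξ x
  eta_xi : ∀ x, η x (ξ x) = 1
  compat : ∀ (x : M) (v w : T x), g x (φ x v) (φ x w) = g x v w - η x v * η x w

/-- An almost coKähler structure: an almost contact metric structure whose associated
pair `(η, ω)`, `ω(X,Y) = g(X, φY)`, is cosymplectic (`dη = 0`, `dω = 0`). -/
structure IsAlmostCoKahler (C : SmoothCalculus M T) (g : ∀ x, T x → T x → ℝ)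
    (φ : ∀ x, T x → T x) (ξ : ∀ x, T x) (η : ∀ x, T x → ℝ)
    extends IsAlmostContactMetric C g φ ξ η : Prop where
  closed_eta : C.IsClosedOneForm η
  closed_omega : C.IsClosedTwoForm (acmForm g φ)

/-- A coKähler structure: an almost coKähler structure which is normal, i.e. whose
Nijenhuis tensor satisfies `N_φ = −2 dη ⊗ ξ`. -/
structure IsCoKahler (C : SmoothCalculus M T) (g : ∀ x, T x → T x → ℝ)
    (φ : ∀ x, T x → T x) (ξ : ∀ x, T x) (η : ∀ x, T x → ℝ)
    extends IsAlmostCoKahler C g φ ξ η : Prop where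
  normal : ∀ X Y, C.IsSmoothVF X → C.IsSmoothVF Y → ∀ x,
    C.nijenhuis φ X Y x = (-(2 * C.extDerivOne η X Y x)) • ξ x

/-- A Kähler structure `(h, J)`: a metric and a compatible integrable almost complex
structure with closed Kähler form `Ω(X,Y) = h(X, JY)`. -/
structure IsKahler (C : SmoothCalculus M T) (h : ∀ x, T x → T x → ℝ)
    (J : ∀ x, T x → T x) : Prop where
  metric : IsMetric C h
  J_linear : ∀ x, IsLinearMap ℝ (J x)
  J_smooth : C.IsSmoothEnd J
  J_sq : ∀ (x : M) (v : T x), J x (J x v) = - v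
  compat : ∀ (x : M) (v w : T x), h x (J x v) (J x w) = h x v w
  closed_omega : C.IsClosedTwoForm (acmForm h J)
  integrable : ∀ X Y, C.IsSmoothVF X → C.IsSmoothVF Y → ∀ x, C.nijenhuis J X Y x = 0

/-- `(a, b, c)` is an even permutation of `(1, 2, 3)` (0-indexed: of `(0, 1, 2)`). -/
def IsEvenPermFin3 (a b c : Fin 3) : Prop :=
  (a = 0 ∧ b = 1 ∧ c = 2) ∨ (a = 1 ∧ b = 2 ∧ c = 0) ∨ (a = 2 ∧ b = 0 ∧ c = 1)

/-- A 3-cosymplectic structure: three coKähler structures with a common metric,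
subject to the quaternionic relations. -/
structure Is3Cosymplectic (C : SmoothCalculus M T) (g : ∀ x, T x → T x → ℝ)
    (φ : Fin 3 → ∀ x, T x → T x) (ξ : Fin 3 → ∀ x, T x)
    (η : Fin 3 → ∀ x, T x → ℝ) : Prop where
  coKahler : ∀ i, IsCoKahler C g (φ i) (ξ i) (η i)
  phi_comp : ∀ a b c, IsEvenPermFin3 a b c → ∀ (x : M) (v : T x),
    φ c x v = φ a x (φ b x v) - η b x v • ξ a x
  phi_comp' : ∀ a b c, IsEvenPermFin3 a b c → ∀ (x : M) (v : T x),
    φ c x v = - φ b x (φ a x v) + η a x v • ξ b x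
  xi_comp : ∀ a b c, IsEvenPermFin3 a b c → ∀ x : M, ξ c x = φ a x (ξ b x)
  xi_comp' : ∀ a b c, IsEvenPermFin3 a b c → ∀ x : M, ξ c x = - φ b x (ξ a x)
  eta_comp : ∀ a b c, IsEvenPermFin3 a b c → ∀ (x : M) (v : T x),
    η c x v = η a x (φ b x v)
  eta_comp' : ∀ a b c, IsEvenPermFin3 a b c → ∀ (x : M) (v : T x),
    η c x v = - η b x (φ a x v)

/-- A hyperKähler structure `(h, J₁, J₂, J₃)`: three Kähler structures with a common
metric whose complex structures satisfy the quaternionic relations. -/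
structure IsHyperKahler (C : SmoothCalculus M T) (h : ∀ x, T x → T x → ℝ)
    (J : Fin 3 → ∀ x, T x → T x) : Prop where
  kahler : ∀ i, IsKahler C h (J i)
  quaternionic : ∀ a b c, IsEvenPermFin3 a b c → ∀ (x : M) (v : T x),
    J c x v = J a x (J b x v)

/-- The Levi-Civita connection of a metric `g`: torsion-free and metric-compatible,
tensorial in the first argument and a derivation in the second. -/
structure IsLeviCivita (C : SmoothCalculus M T) (g : ∀ x, T x → T x → ℝ)
    (D : (∀ x, T x) → (∀ x, T x) → ∀ x, T x) : Prop where
  add_left : ∀ (X Y Z : ∀ x, T x) (x : M),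
    D (fun y => X y + Y y) Z x = D X Z x + D Y Z x
  tensorial_left : ∀ (f : M → ℝ) (X Y : ∀ x, T x) (x : M),
    D (fun y => f y • X y) Y x = f x • D X Y x
  add_right : ∀ (X Y Z : ∀ x, T x) (x : M),
    D X (fun y => Y y + Z y) x = D X Y x + D X Z x
  leibniz : ∀ (f : M → ℝ) (X Y : ∀ x, T x) (x : M),
    D X (fun y => f y • Y y) x = C.d f x (X x) • Y x + f x • D X Y x
  metric_compat : ∀ (X Y Z : ∀ x, T x) (x : M),
    C.d (fun y => g y (Y y) (Z y)) x (X x) = g x (D X Y x) (Z x) + g x (Y x) (D X Z x)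
  torsion_free : ∀ (X Y : ∀ x, T x) (x : M), D X Y x - D Y X x = C.bracket X Y x

/-- A vector field `X` is geodesic (auto-parallel), `∇_X X = 0`; equivalently, all of its
integral curves are geodesics of the underlying metric. -/
def IsGeodesicVectorField (D : (∀ x, T x) → (∀ x, T x) → ∀ x, T x) (X : ∀ x, T x) : Prop :=
  ∀ x, D X X x = 0

end Structures

section Actions

variable {M : Type*} {T : M → Type*} [∀ x, AddCommGroup (T x)] [∀ x, Module ℝ (T x)]

/-- The data of a smooth action of a Lie group `G`, with Lie algebra `𝔤`, on a manifold:
the differentials of the translations, the adjoint representation and the fundamental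
vector fields `A ↦ A*`. -/
structure LieActionData (C : SmoothCalculus M T) (G : Type*) [Group G] [MulAction G M]
    (𝔤 : Type*) [LieRing 𝔤] [LieAlgebra ℝ 𝔤] where
  /-- the differential `(L_h)_* : T_p M → T_{h•p} M` of the translation by `h` -/
  dact : ∀ (h : G) (p : M), T p →ₗ[ℝ] T (h • p)
  dact_bijective : ∀ (h : G) (p : M), Function.Bijective (dact h p)
  /-- the adjoint representation of `G` on `𝔤` -/
  Ad : G → 𝔤 →ₗ[ℝ] 𝔤
  Ad_one : Ad 1 = LinearMap.id
  Ad_mul : ∀ g h : G, Ad (g * h) = (Ad g).comp (Ad h)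
  /-- the fundamental vector field `A*` of `A ∈ 𝔤` -/
  fund : 𝔤 → ∀ x : M, T x
  fund_add : ∀ (A B : 𝔤) (x : M), fund (A + B) x = fund A x + fund B x
  fund_smul : ∀ (c : ℝ) (A : 𝔤) (x : M), fund (c • A) x = c • fund A x
  fund_smooth : ∀ A : 𝔤, C.IsSmoothVF (fund A)
  fund_equivariant : ∀ (h : G) (A : 𝔤) (p : M),
    dact h p (fund A p) = fund (Ad h A) (h • p)
  smooth_comp : ∀ (f : M → ℝ) (h : G), C.IsSmoothFun f → C.IsSmoothFun fun p => f (h • p)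
  chain_rule : ∀ (f : M → ℝ) (h : G) (p : M) (v : T p),
    C.d (fun y => f (h • y)) p v = C.d f (h • p) (dact h p v)

variable {G : Type*} [Group G] [MulAction G M]
variable {𝔤 : Type*} [LieRing 𝔤] [LieAlgebra ℝ 𝔤]

/-- The action preserves a 1-form: `L_h^* η = η`. -/
def PreservesOneForm {C : SmoothCalculus M T} (act : LieActionData C G 𝔤)
    (η : ∀ x, T x → ℝ) : Prop :=
  ∀ (h : G) (p : M) (v : T p), η (h • p) (act.dact h p v) = η p v

/-- The action preserves a 2-tensor (a 2-form or a metric): `L_h^* ω = ω`. -/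
def PreservesTwoTensor {C : SmoothCalculus M T} (act : LieActionData C G 𝔤)
    (ω : ∀ x, T x → T x → ℝ) : Prop :=
  ∀ (h : G) (p : M) (v w : T p), ω (h • p) (act.dact h p v) (act.dact h p w) = ω p v w

/-- The action preserves an endomorphism field: `(L_h)_* ∘ φ = φ ∘ (L_h)_*`. -/
def PreservesEnd {C : SmoothCalculus M T} (act : LieActionData C G 𝔤)
    (φ : ∀ x, T x → T x) : Prop :=
  ∀ (h : G) (p : M) (v : T p), φ (h • p) (act.dact h p v) = act.dact h p (φ p v)

/-- The action preserves a vector field: `(L_h)_* ξ = ξ`. -/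
def PreservesVF {C : SmoothCalculus M T} (act : LieActionData C G 𝔤)
    (ξ : ∀ x, T x) : Prop :=
  ∀ (h : G) (p : M), act.dact h p (ξ p) = ξ (h • p)

/-- A moment map, in the sense of Albert, for an action on a cosymplectic manifold
`(M, η, ω)` with Reeb field `ξ`: an equivariant map `μ : M → 𝔤*` such that each
fundamental vector field `A*` is the Hamiltonian vector field of
`μ^A := ⟨μ, A⟩` (i.e. `η(A*) = 0` and `ω(A*, −) = dμ^A − ξ(μ^A) η`), and `dμ^A(ξ) = 0`. -/
structure IsMomentMap (C : SmoothCalculus M T) (η : ∀ x, T x → ℝ)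
    (ω : ∀ x, T x → T x → ℝ) (ξ : ∀ x, T x)
    (act : LieActionData C G 𝔤) (μ : M → Module.Dual ℝ 𝔤) : Prop where
  smooth : ∀ A : 𝔤, C.IsSmoothFun fun p => μ p A
  /-- equivariance with respect to the coadjoint action `⟨Ad*_h ζ, A⟩ = ⟨ζ, Ad_{h⁻¹} A⟩` -/
  equivariant : ∀ (h : G) (p : M) (A : 𝔤), μ (h • p) A = μ p (act.Ad h⁻¹ A)
  fund_horizontal : ∀ (A : 𝔤) (x : M), η x (act.fund A x) = 0
  fund_hamiltonian : ∀ (A : 𝔤) (x : M) (v : T x),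
    ω x (act.fund A x) v
      = C.d (fun y => μ y A) x v - C.d (fun y => μ y A) x (ξ x) * η x v
  reeb_invariant : ∀ (A : 𝔤) (x : M), C.d (fun y => μ y A) x (ξ x) = 0

/-- A moment map for an action on a symplectic (in particular Kähler) manifold with
symplectic form `Ω`: an equivariant map with `ι_{A*} Ω = dμ^A`. -/
structure IsKahlerMomentMap (C : SmoothCalculus M T) (Ω : ∀ x, T x → T x → ℝ)
    (act : LieActionData C G 𝔤) (μ : M → Module.Dual ℝ 𝔤) : Prop where
  smooth : ∀ A : 𝔤, C.IsSmoothFun fun p => μ p A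
  equivariant : ∀ (h : G) (p : M) (A : 𝔤), μ (h • p) A = μ p (act.Ad h⁻¹ A)
  fund_hamiltonian : ∀ (A : 𝔤) (x : M) (v : T x),
    Ω x (act.fund A x) v = C.d (fun y => μ y A) x v

/-- `ζ` is a regular value of `μ`: the differential `dμ_p : T_p M → 𝔤*` is surjective at
every point of the level set `μ⁻¹(ζ)`. -/
def IsRegularValue (C : SmoothCalculus M T) (μ : M → Module.Dual ℝ 𝔤)
    (ζ : Module.Dual ℝ 𝔤) : Prop :=
  ∀ p : M, μ p = ζ → ∀ ℓ : Module.Dual ℝ 𝔤,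
    ∃ v : T p, ∀ A : 𝔤, C.d (fun y => μ y A) p v = ℓ A

/-- `ζ ∈ 𝔤*` is central: it is fixed by the coadjoint action of all of `G`. -/
def IsCentralValue {C : SmoothCalculus M T} (act : LieActionData C G 𝔤)
    (ζ : Module.Dual ℝ 𝔤) : Prop :=
  ∀ (h : G) (A : 𝔤), ζ (act.Ad h A) = ζ A

end Actions

/-- The action of `G` on `M` is free. -/
def IsFreeAction (G M : Type*) [Group G] [MulAction G M] : Prop :=
  ∀ (h : G) (p : M), h • p = p → h = 1

/-- The action of `G` on `M` is proper: `(h, p) ↦ (h • p, p)` is a proper map. -/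
def IsProperAction (G M : Type*) [Group G] [MulAction G M]
    [TopologicalSpace G] [TopologicalSpace M] : Prop :=
  IsProperMap fun q : G × M => (q.1 • q.2, q.2)

section Reduction

variable {M : Type*} {T : M → Type*} [∀ x, AddCommGroup (T x)] [∀ x, Module ℝ (T x)]
variable {G : Type*} [Group G] [MulAction G M]
variable {𝔤 : Type*} [LieRing 𝔤] [LieAlgebra ℝ 𝔤]
variable {Q : Type*} {TQ : Q → Type*} [∀ q, AddCommGroup (TQ q)] [∀ q, Module ℝ (TQ q)]

/-- `v ∈ T_p M` is tangent to the level set `μ⁻¹(ζ)` through `p`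
(the kernel of `dμ_p`; for a regular value this is `T_p μ⁻¹(ζ)`). -/
def LevelTangent (C : SmoothCalculus M T) (μ : M → Module.Dual ℝ 𝔤)
    (p : M) (v : T p) : Prop :=
  ∀ A : 𝔤, C.d (fun y => μ y A) p v = 0

/-- Tangency to the common level set of a triple of moment maps. -/
def LevelTangent3 (C : SmoothCalculus M T) (μ : Fin 3 → M → Module.Dual ℝ 𝔤)
    (p : M) (v : T p) : Prop :=
  ∀ i, LevelTangent C (μ i) p v

/-- `v` is horizontal at `p ∈ μ⁻¹(ζ)`: tangent to the level set and `g`-orthogonal to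
the orbit directions `𝔤_p = {A*_p : A ∈ 𝔤}`. -/
def IsHorizontalAt (C : SmoothCalculus M T) (act : LieActionData C G 𝔤)
    (g : ∀ x, T x → T x → ℝ) (μ : M → Module.Dual ℝ 𝔤) (p : M) (v : T p) : Prop :=
  LevelTangent C μ p v ∧ ∀ A : 𝔤, g p v (act.fund A p) = 0

/-- Horizontality for a triple of moment maps. -/
def IsHorizontalAt3 (C : SmoothCalculus M T) (act : LieActionData C G 𝔤)
    (g : ∀ x, T x → T x → ℝ) (μ : Fin 3 → M → Module.Dual ℝ 𝔤) (p : M) (v : T p) : Prop :=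
  LevelTangent3 C μ p v ∧ ∀ A : 𝔤, g p v (act.fund A p) = 0

/-- The reduced cosymplectic structure `(η^ζ, ω^ζ)` on the quotient `Q` of the level set
`μ⁻¹(ζ)`, characterized by `π^* η^ζ = η|_{μ⁻¹(ζ)}` and `π^* ω^ζ = ω|_{μ⁻¹(ζ)}`. -/
structure IsReducedCosymplectic (C : SmoothCalculus M T)
    (η : ∀ x, T x → ℝ) (ω : ∀ x, T x → T x → ℝ)
    (μ : M → Module.Dual ℝ 𝔤) (ζ : Module.Dual ℝ 𝔤)
    (CQ : SmoothCalculus Q TQ) (π : {p : M // μ p = ζ} → Q)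
    (dπ : ∀ p : {p : M // μ p = ζ}, T p.1 → TQ (π p))
    (ηQ : ∀ q, TQ q → ℝ) (ωQ : ∀ q, TQ q → TQ q → ℝ) : Prop where
  cosymplectic : IsCosymplectic CQ ηQ ωQ
  eta_pullback : ∀ (p : {p : M // μ p = ζ}) (v : T p.1), LevelTangent C μ p.1 v →
    ηQ (π p) (dπ p v) = η p.1 v
  omega_pullback : ∀ (p : {p : M // μ p = ζ}) (v w : T p.1),
    LevelTangent C μ p.1 v → LevelTangent C μ p.1 w →
    ωQ (π p) (dπ p v) (dπ p w) = ω p.1 v w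

/-- The reduced coKähler structure `(g^ζ, φ^ζ, ξ^ζ, η^ζ)` on the quotient `Q` of the
level set `μ⁻¹(ζ)`: a coKähler structure on `Q` such that `g^ζ` is the quotient metric
(computed through horizontal lifts), whose underlying cosymplectic structure is the
reduced one (`π^* η^ζ = η`, `π^* ω^ζ = ω` on the level set) and `ξ^ζ = dπ(ξ)`. -/
structure IsReducedCoKahler (C : SmoothCalculus M T)
    (g : ∀ x, T x → T x → ℝ) (φ : ∀ x, T x → T x) (ξ : ∀ x, T x) (η : ∀ x, T x → ℝ)
    (act : LieActionData C G 𝔤)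
    (μ : M → Module.Dual ℝ 𝔤) (ζ : Module.Dual ℝ 𝔤)
    (CQ : SmoothCalculus Q TQ) (π : {p : M // μ p = ζ} → Q)
    (dπ : ∀ p : {p : M // μ p = ζ}, T p.1 → TQ (π p))
    (gQ : ∀ q, TQ q → TQ q → ℝ) (φQ : ∀ q, TQ q → TQ q) (ξQ : ∀ q, TQ q)
    (ηQ : ∀ q, TQ q → ℝ) : Prop where
  coKahler : IsCoKahler CQ gQ φQ ξQ ηQ
  metric_pullback : ∀ (p : {p : M // μ p = ζ}) (v w : T p.1),
    IsHorizontalAt C act g μ p.1 v → IsHorizontalAt C act g μ p.1 w →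
    gQ (π p) (dπ p v) (dπ p w) = g p.1 v w
  eta_pullback : ∀ (p : {p : M // μ p = ζ}) (v : T p.1), LevelTangent C μ p.1 v →
    ηQ (π p) (dπ p v) = η p.1 v
  omega_pullback : ∀ (p : {p : M // μ p = ζ}) (v w : T p.1),
    LevelTangent C μ p.1 v → LevelTangent C μ p.1 w →
    acmForm gQ φQ (π p) (dπ p v) (dπ p w) = acmForm g φ p.1 v w
  xi_pullback : ∀ p : {p : M // μ p = ζ}, ξQ (π p) = dπ p (ξ p.1)

/-- The reduced Kähler structure `(h^ζ, J^ζ)` on the quotient `Q` of the level set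
`μ⁻¹(ζ)`: a Kähler structure on `Q` such that `h^ζ` is the quotient metric and the
reduced Kähler form pulls back to `Ω|_{μ⁻¹(ζ)}`. -/
structure IsReducedKahler (C : SmoothCalculus M T)
    (h : ∀ x, T x → T x → ℝ) (J : ∀ x, T x → T x)
    (act : LieActionData C G 𝔤)
    (μ : M → Module.Dual ℝ 𝔤) (ζ : Module.Dual ℝ 𝔤)
    (CQ : SmoothCalculus Q TQ) (π : {p : M // μ p = ζ} → Q)
    (dπ : ∀ p : {p : M // μ p = ζ}, T p.1 → TQ (π p))
    (hQ : ∀ q, TQ q → TQ q → ℝ) (JQ : ∀ q, TQ q → TQ q) : Prop where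
  kahler : IsKahler CQ hQ JQ
  metric_pullback : ∀ (p : {p : M // μ p = ζ}) (v w : T p.1),
    IsHorizontalAt C act h μ p.1 v → IsHorizontalAt C act h μ p.1 w →
    hQ (π p) (dπ p v) (dπ p w) = h p.1 v w
  omega_pullback : ∀ (p : {p : M // μ p = ζ}) (v w : T p.1),
    LevelTangent C μ p.1 v → LevelTangent C μ p.1 w →
    acmForm hQ JQ (π p) (dπ p v) (dπ p w) = acmForm h J p.1 v w

/-- The reduced 3-cosymplectic structure on the quotient `Q` of the common level set
`μ⁻¹(ζ) = μ₁⁻¹(ζ₁) ∩ μ₂⁻¹(ζ₂) ∩ μ₃⁻¹(ζ₃)`: a 3-cosymplectic structure on `Q` whose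
metric is the quotient metric and whose three coKähler structures are the coKähler
reductions of the three coKähler structures of `M`. -/
structure IsReduced3Cosymplectic (C : SmoothCalculus M T)
    (g : ∀ x, T x → T x → ℝ) (φ : Fin 3 → ∀ x, T x → T x) (ξ : Fin 3 → ∀ x, T x)
    (η : Fin 3 → ∀ x, T x → ℝ)
    (act : LieActionData C G 𝔤)
    (μ : Fin 3 → M → Module.Dual ℝ 𝔤) (ζ : Fin 3 → Module.Dual ℝ 𝔤)
    (CQ : SmoothCalculus Q TQ) (π : {p : M // ∀ i, μ i p = ζ i} → Q)
    (dπ : ∀ p : {p : M // ∀ i, μ i p = ζ i}, T p.1 → TQ (π p))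
    (gQ : ∀ q, TQ q → TQ q → ℝ) (φQ : Fin 3 → ∀ q, TQ q → TQ q)
    (ξQ : Fin 3 → ∀ q, TQ q) (ηQ : Fin 3 → ∀ q, TQ q → ℝ) : Prop where
  threeCosymplectic : Is3Cosymplectic CQ gQ φQ ξQ ηQ
  metric_pullback : ∀ (p : {p : M // ∀ i, μ i p = ζ i}) (v w : T p.1),
    IsHorizontalAt3 C act g μ p.1 v → IsHorizontalAt3 C act g μ p.1 w →
    gQ (π p) (dπ p v) (dπ p w) = g p.1 v w
  eta_pullback : ∀ (i : Fin 3) (p : {p : M // ∀ i, μ i p = ζ i}) (v : T p.1),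
    LevelTangent3 C μ p.1 v → ηQ i (π p) (dπ p v) = η i p.1 v
  omega_pullback : ∀ (i : Fin 3) (p : {p : M // ∀ i, μ i p = ζ i}) (v w : T p.1),
    LevelTangent3 C μ p.1 v → LevelTangent3 C μ p.1 w →
    acmForm gQ (φQ i) (π p) (dπ p v) (dπ p w) = acmForm g (φ i) p.1 v w
  xi_pullback : ∀ (i : Fin 3) (p : {p : M // ∀ i, μ i p = ζ i}),
    ξQ i (π p) = dπ p (ξ i p.1)

/-- The reduced hyperKähler structure on the quotient `Q` of the common level set of the
hyperKähler moment map. -/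
structure IsReducedHyperKahler (C : SmoothCalculus M T)
    (h : ∀ x, T x → T x → ℝ) (J : Fin 3 → ∀ x, T x → T x)
    (act : LieActionData C G 𝔤)
    (μ : Fin 3 → M → Module.Dual ℝ 𝔤) (ζ : Fin 3 → Module.Dual ℝ 𝔤)
    (CQ : SmoothCalculus Q TQ) (π : {p : M // ∀ i, μ i p = ζ i} → Q)
    (dπ : ∀ p : {p : M // ∀ i, μ i p = ζ i}, T p.1 → TQ (π p))
    (hQ : ∀ q, TQ q → TQ q → ℝ) (JQ : Fin 3 → ∀ q, TQ q → TQ q) : Prop where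
  hyperKahler : IsHyperKahler CQ hQ JQ
  metric_pullback : ∀ (p : {p : M // ∀ i, μ i p = ζ i}) (v w : T p.1),
    IsHorizontalAt3 C act h μ p.1 v → IsHorizontalAt3 C act h μ p.1 w →
    hQ (π p) (dπ p v) (dπ p w) = h p.1 v w
  omega_pullback : ∀ (i : Fin 3) (p : {p : M // ∀ i, μ i p = ζ i}) (v w : T p.1),
    LevelTangent3 C μ p.1 v → LevelTangent3 C μ p.1 w →
    acmForm hQ (JQ i) (π p) (dπ p v) (dπ p w) = acmForm h (J i) p.1 v w

end Reduction

section Cylinder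

/-- The lifted action `h • (p, t) := (h • p, t)` of a group on a cylinder `M × ℝ`. -/
instance cylMulAction {G M : Type*} [Group G] [MulAction G M] : MulAction G (M × ℝ) where
  smul h q := (h • q.1, q.2)
  one_smul q := by show (_ • q.1, q.2) = q; rw [one_smul]
  mul_smul a b q := by
    show ((a * b) • q.1, q.2) = (a • (b • q.1), q.2)
    rw [mul_smul]

/-- The lifted action `h • (p, t) := (h • p, t)` of a group on `M × ℝ³`. -/
instance c3MulAction {G M : Type*} [Group G] [MulAction G M] :
    MulAction G (M × (Fin 3 → ℝ)) where
  smul h q := (h • q.1, q.2)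
  one_smul q := by show (_ • q.1, q.2) = q; rw [one_smul]
  mul_smul a b q := by
    show ((a * b) • q.1, q.2) = (a • (b • q.1), q.2)
    rw [mul_smul]

variable (M : Type*) (T : M → Type*) [∀ x, AddCommGroup (T x)] [∀ x, Module ℝ (T x)]

/-- The 1-form `η = dt` on the cylinder `M × ℝ`. -/
def cylEta : ∀ q : M × ℝ, T q.1 × ℝ → ℝ := fun _ u => u.2

/-- The Reeb field `ξ = ∂/∂t` on the cylinder `M × ℝ`. -/
def cylXi : ∀ q : M × ℝ, T q.1 × ℝ := fun _ => (0, 1)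

variable {M T}

/-- The product metric `g = h + dt²` on the cylinder `M × ℝ`. -/
def cylMetric (h : ∀ x, T x → T x → ℝ) :
    ∀ q : M × ℝ, (T q.1 × ℝ) → (T q.1 × ℝ) → ℝ :=
  fun q u v => h q.1 u.1 v.1 + u.2 * v.2

/-- The endomorphism field `φ(X, f ∂/∂t) = (J X, 0)` on the cylinder of a Kähler
manifold. -/
def cylPhiOfJ (J : ∀ x, T x → T x) : ∀ q : M × ℝ, T q.1 × ℝ → T q.1 × ℝ :=
  fun q u => (J q.1 u.1, 0)

/-- The complex structure `J(X, f ∂/∂t) = (φ X − f ξ, η(X) ∂/∂t)` on the cylinder of an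
(almost) contact metric manifold. -/
def cylJOfACS (φ : ∀ x, T x → T x) (ξ : ∀ x, T x) (η : ∀ x, T x → ℝ) :
    ∀ q : M × ℝ, T q.1 × ℝ → T q.1 × ℝ :=
  fun q u => (φ q.1 u.1 - u.2 • ξ q.1, η q.1 u.1)

/-- The cross product on `ℝ³`. -/
def cross3 (a b : Fin 3 → ℝ) : Fin 3 → ℝ :=
  ![a 1 * b 2 - a 2 * b 1, a 2 * b 0 - a 0 * b 2, a 0 * b 1 - a 1 * b 0]

variable (M T)

/-- The 1-forms `η_i = dt_i` on `M × ℝ³`. -/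
def c3Eta (i : Fin 3) : ∀ q : M × (Fin 3 → ℝ), T q.1 × (Fin 3 → ℝ) → ℝ :=
  fun _ u => u.2 i

/-- The Reeb fields `ξ_i = ∂/∂t_i` on `M × ℝ³`. -/
def c3Xi (i : Fin 3) : ∀ q : M × (Fin 3 → ℝ), T q.1 × (Fin 3 → ℝ) :=
  fun _ => (0, Pi.single i 1)

variable {M T}

/-- The product metric `g = h + Σ dt_i²` on `M × ℝ³`. -/
def c3Metric (h : ∀ x, T x → T x → ℝ) :
    ∀ q : M × (Fin 3 → ℝ), (T q.1 × (Fin 3 → ℝ)) → (T q.1 × (Fin 3 → ℝ)) → ℝ :=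
  fun q u v => h q.1 u.1 v.1 + ∑ j : Fin 3, u.2 j * v.2 j

/-- The endomorphism fields `φ_i` of the natural 3-cosymplectic structure on `M × ℝ³`
induced by a hyperKähler structure `(h, J₁, J₂, J₃)`; on the `ℝ³`-factor `φ_i` acts by the
cross product with the `i`-th basis vector, e.g.
`φ₁(X, f₁ ∂_1, f₂ ∂_2, f₃ ∂_3) = (J₁X, 0, −f₃ ∂_2, f₂ ∂_3)`. -/
def c3Phi (J : Fin 3 → ∀ x, T x → T x) (i : Fin 3) :
    ∀ q : M × (Fin 3 → ℝ), T q.1 × (Fin 3 → ℝ) → T q.1 × (Fin 3 → ℝ) :=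
  fun q u => (J i q.1 u.1, cross3 (Pi.single i 1) u.2)

end Cylinder

end

/-!
Each moment map turns the level-set condition into an orthogonality condition:
`dμ_i^A(v) = ω_i(A*, v) = g(A*, φ_i v)`, and `g(A*, ξ_j) = η_j(A*) = 0`. The quaternionic
relations express `φ₂ξ₁`, `φ₃ξ₁`, `φ₂φ₁` and `φ₃φ₁` through `ξ_j` and `φ₃`, `φ₂`, so
tangency of `ξ₁` and `φ₁ v` to `μ₂⁻¹(ζ₂) ∩ μ₃⁻¹(ζ₃)` reduces to that of `v`.
-/

theorem IsEvenPermFin3.rotate {a b c : Fin 3} (h : IsEvenPermFin3 a b c) :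
    IsEvenPermFin3 b c a := by
  unfold IsEvenPermFin3 at *
  omega

namespace IsAlmostContactMetric

variable {M : Type*} {T : M → Type*} [∀ x, AddCommGroup (T x)] [∀ x, Module ℝ (T x)]
  {C : SmoothCalculus M T} {g : ∀ x, T x → T x → ℝ} {φ : ∀ x, T x → T x}
  {ξ : ∀ x, T x} {η : ∀ x, T x → ℝ}

theorem phi_xi (acm : IsAlmostContactMetric C g φ ξ η) (x : M) : φ x (ξ x) = 0 := by
  have hφ := acm.phi_linear x
  have hη := acm.eta_linear x
  have phi_sq_xi : φ x (φ x (ξ x)) = 0 := by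
    rw [acm.phi_sq, acm.eta_xi, one_smul, neg_add_cancel]
  -- `φ³ξ` computed in two ways: `φ(φ²ξ) = 0` and `φ²(φξ) = -φξ + η(φξ) ξ`
  have phi_xi_eq_smul : φ x (ξ x) = η x (φ x (ξ x)) • ξ x := by
    have h := acm.phi_sq x (φ x (ξ x))
    rw [phi_sq_xi, hφ.map_zero, eq_comm, neg_add_eq_zero] at h
    exact h
  generalize η x (φ x (ξ x)) = c at phi_xi_eq_smul
  have h_sq : c * c = 0 := by
    have h := congrArg (η x) phi_sq_xi
    rw [phi_xi_eq_smul, hφ.map_smul, phi_xi_eq_smul, smul_smul, hη.map_smul, acm.eta_xi, hη.map_zero,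
      smul_eq_mul, mul_one] at h
    exact h
  rw [phi_xi_eq_smul, mul_self_eq_zero.mp h_sq, zero_smul]

theorem g_xi (acm : IsAlmostContactMetric C g φ ξ η) (x : M) (v : T x) :
    g x v (ξ x) = η x v := by
  have h := acm.compat x v (ξ x)
  rw [acm.phi_xi x, (acm.metric.linear_right x (φ x v)).map_zero, acm.eta_xi, mul_one] at h
  linarith

end IsAlmostContactMetric

namespace IsMomentMap

variable {M : Type*} {T : M → Type*} [∀ x, AddCommGroup (T x)] [∀ x, Module ℝ (T x)]
  {C : SmoothCalculus M T} {G : Type*} [Group G] [MulAction G M]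
  {𝔤 : Type*} [LieRing 𝔤] [LieAlgebra ℝ 𝔤] {act : LieActionData C G 𝔤}
  {η : ∀ x, T x → ℝ} {ξ : ∀ x, T x} {μ : M → Module.Dual ℝ 𝔤}

theorem d_apply {ω : ∀ x, T x → T x → ℝ} (hμ : IsMomentMap C η ω ξ act μ)
    (A : 𝔤) (x : M) (v : T x) : C.d (fun y => μ y A) x v = ω x (act.fund A x) v := by
  rw [hμ.fund_hamiltonian, hμ.reeb_invariant, zero_mul, sub_zero]

theorem levelTangent_iff {ω : ∀ x, T x → T x → ℝ} (hμ : IsMomentMap C η ω ξ act μ)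
    (p : M) (v : T p) : LevelTangent C μ p v ↔ ∀ A, ω p (act.fund A p) v = 0 := by
  simp only [LevelTangent, hμ.d_apply]

theorem g_fund_xi {g : ∀ x, T x → T x → ℝ} {φ : ∀ x, T x → T x}
    (hμ : IsMomentMap C η (acmForm g φ) ξ act μ) (acm : IsAlmostContactMetric C g φ ξ η)
    (A : 𝔤) (x : M) : g x (act.fund A x) (ξ x) = 0 := by
  rw [acm.g_xi, hμ.fund_horizontal]

end IsMomentMap

namespace Is3Cosymplectic

variable {M : Type*} {T : M → Type*} [∀ x, AddCommGroup (T x)] [∀ x, Module ℝ (T x)]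
  {C : SmoothCalculus M T} {G : Type*} [Group G] [MulAction G M]
  {𝔤 : Type*} [LieRing 𝔤] [LieAlgebra ℝ 𝔤] {act : LieActionData C G 𝔤}
  {g : ∀ x, T x → T x → ℝ} {φ : Fin 3 → ∀ x, T x → T x} {ξ : Fin 3 → ∀ x, T x}
  {η : Fin 3 → ∀ x, T x → ℝ} {μ : Fin 3 → M → Module.Dual ℝ 𝔤}

theorem levelTangent_xi (h3 : Is3Cosymplectic C g φ ξ η)
    (hmom : ∀ i, IsMomentMap C (η i) (acmForm g (φ i)) (ξ i) act (μ i))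
    {a b c : Fin 3} (habc : IsEvenPermFin3 a b c) (p : M) :
    LevelTangent C (μ b) p (ξ a p) ∧ LevelTangent C (μ c) p (ξ a p) := by
  have hcab := habc.rotate.rotate
  have g_fund_xi (i : Fin 3) (A : 𝔤) :=
    (hmom i).g_fund_xi (h3.coKahler i).toIsAlmostContactMetric A p
  have phi_b_xi_a : φ b p (ξ a p) = -ξ c p := by rw [h3.xi_comp' a b c habc, neg_neg]
  have phi_c_xi_a : φ c p (ξ a p) = ξ b p := (h3.xi_comp c a b hcab p).symm
  refine ⟨((hmom b).levelTangent_iff p _).mpr fun A => ?_,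
    ((hmom c).levelTangent_iff p _).mpr fun A => ?_⟩
  · simp only [acmForm, phi_b_xi_a, ((h3.coKahler b).metric.linear_right p _).map_neg,
      g_fund_xi c A, neg_zero]
  · simp only [acmForm, phi_c_xi_a, g_fund_xi b A]

theorem levelTangent_phi (h3 : Is3Cosymplectic C g φ ξ η)
    (hmom : ∀ i, IsMomentMap C (η i) (acmForm g (φ i)) (ξ i) act (μ i))
    {a b c : Fin 3} (habc : IsEvenPermFin3 a b c) {p : M} {v : T p}
    (hb : LevelTangent C (μ b) p v) (hc : LevelTangent C (μ c) p v) :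
    LevelTangent C (μ b) p (φ a p v) ∧ LevelTangent C (μ c) p (φ a p v) := by
  have hcab := habc.rotate.rotate
  have g_fund_xi (i : Fin 3) (A : 𝔤) :=
    (hmom i).g_fund_xi (h3.coKahler i).toIsAlmostContactMetric A p
  have phi_b_phi_a : φ b p (φ a p v) = -φ c p v + η a p v • ξ b p := by
    rw [h3.phi_comp' a b c habc p v]; abel
  have phi_c_phi_a : φ c p (φ a p v) = φ b p v + η a p v • ξ c p := by
    rw [h3.phi_comp c a b hcab p v]; abel
  rw [(hmom b).levelTangent_iff] at hb ⊢
  rw [(hmom c).levelTangent_iff] at hc ⊢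
  have hg (A : 𝔤) := (h3.coKahler a).metric.linear_right p (act.fund A p)
  refine ⟨fun A => ?_, fun A => ?_⟩
  · simp only [acmForm] at hc ⊢
    rw [phi_b_phi_a, (hg A).map_add, (hg A).map_neg, (hg A).map_smul, hc A, g_fund_xi b A]
    simp
  · simp only [acmForm] at hb ⊢
    rw [phi_c_phi_a, (hg A).map_add, (hg A).map_smul, hb A, g_fund_xi c A]
    simp

end Is3Cosymplectic

/-- Indices are 0-based: `μ₂ = μ 1`, `μ₃ = μ 2`, `φ₁ = φ 0`, `ξ₁ = ξ 0`. -/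
theorem intersection_of_levels_is_almost_contact_submanifold_general
    {M : Type*} {T : M → Type*} [∀ x, AddCommGroup (T x)] [∀ x, Module ℝ (T x)]
    {G : Type*} [Group G] [MulAction G M]
    {𝔤 : Type*} [LieRing 𝔤] [LieAlgebra ℝ 𝔤]
    (C : SmoothCalculus M T)
    (g : ∀ x, T x → T x → ℝ) (φ : Fin 3 → ∀ x, T x → T x)
    (ξ : Fin 3 → ∀ x, T x) (η : Fin 3 → ∀ x, T x → ℝ)
    (h3 : Is3Cosymplectic C g φ ξ η)
    (act : LieActionData C G 𝔤)
    (μ : Fin 3 → M → Module.Dual ℝ 𝔤)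
    (hmom : ∀ i, IsMomentMap C (η i) (acmForm g (φ i)) (ξ i) act (μ i))
    (ζ₂ ζ₃ : Module.Dual ℝ 𝔤) :
    ∀ p : M, μ 1 p = ζ₂ → μ 2 p = ζ₃ →
      -- `ξ₁` is tangent to `N = μ₂⁻¹(ζ₂) ∩ μ₃⁻¹(ζ₃)`
      (LevelTangent C (μ 1) p (ξ 0 p) ∧ LevelTangent C (μ 2) p (ξ 0 p)) ∧
      -- and `φ₁(T_p N) ⊆ T_p N`
      (∀ v : T p, LevelTangent C (μ 1) p v → LevelTangent C (μ 2) p v →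
        LevelTangent C (μ 1) p (φ 0 p v) ∧ LevelTangent C (μ 2) p (φ 0 p v)) := by
  have h012 : IsEvenPermFin3 0 1 2 := Or.inl ⟨rfl, rfl, rfl⟩
  intro p _ _
  exact ⟨h3.levelTangent_xi hmom h012 p,
    fun _ h1 h2 => h3.levelTangent_phi hmom h012 h1 h2⟩

/-- Let `(M, g, (φ_i, ξ_i, η_i)_{i=1,2,3})` be a 3-cosymplectic manifold with underlying
cosymplectic structures `(η_i, ω_i)`, carrying an action of a Lie group `G` that is
Hamiltonian with respect to each `(η_i, ω_i)` with moment maps `μ_i : M → 𝔤*`.  Let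
`ζ₂, ζ₃ ∈ 𝔤*` be regular values of `μ₂, μ₃` respectively, and suppose the submanifolds
`μ₂⁻¹(ζ₂)` and `μ₃⁻¹(ζ₃)` intersect transversally.  Then
`N := μ₂⁻¹(ζ₂) ∩ μ₃⁻¹(ζ₃)` is an almost contact submanifold of `(M, φ₁, ξ₁, η₁)`:
`ξ₁` is tangent to `N` and `φ₁(TN) ⊆ TN`.
(Indices are 0-based: `μ₂ = μ 1`, `μ₃ = μ 2`, `φ₁ = φ 0`, `ξ₁ = ξ 0`.) -/
theorem intersection_of_levels_is_almost_contact_submanifold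
    {M : Type*} {T : M → Type*} [∀ x, AddCommGroup (T x)] [∀ x, Module ℝ (T x)]
    [TopologicalSpace M]
    {G : Type*} [Group G] [TopologicalSpace G] [MulAction G M]
    {𝔤 : Type*} [LieRing 𝔤] [LieAlgebra ℝ 𝔤]
    (C : SmoothCalculus M T)
    (g : ∀ x, T x → T x → ℝ) (φ : Fin 3 → ∀ x, T x → T x)
    (ξ : Fin 3 → ∀ x, T x) (η : Fin 3 → ∀ x, T x → ℝ)
    (h3 : Is3Cosymplectic C g φ ξ η)
    (act : LieActionData C G 𝔤)
    (μ : Fin 3 → M → Module.Dual ℝ 𝔤)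
    (hmom : ∀ i, IsMomentMap C (η i) (acmForm g (φ i)) (ξ i) act (μ i))
    (ζ₂ ζ₃ : Module.Dual ℝ 𝔤)
    (hreg₂ : IsRegularValue C (μ 1) ζ₂) (hreg₃ : IsRegularValue C (μ 2) ζ₃)
    -- transversality of `μ₂⁻¹(ζ₂)` and `μ₃⁻¹(ζ₃)`:
    (htrans : ∀ p : M, μ 1 p = ζ₂ → μ 2 p = ζ₃ → ∀ v : T p,
      ∃ v₂ v₃ : T p, LevelTangent C (μ 1) p v₂ ∧ LevelTangent C (μ 2) p v₃ ∧
        v = v₂ + v₃) :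
    ∀ p : M, μ 1 p = ζ₂ → μ 2 p = ζ₃ →
      -- `ξ₁` is tangent to `N = μ₂⁻¹(ζ₂) ∩ μ₃⁻¹(ζ₃)`
      (LevelTangent C (μ 1) p (ξ 0 p) ∧ LevelTangent C (μ 2) p (ξ 0 p)) ∧
      -- and `φ₁(T_p N) ⊆ T_p N`
      (∀ v : T p, LevelTangent C (μ 1) p v → LevelTangent C (μ 2) p v →
        LevelTangent C (μ 1) p (φ 0 p v) ∧ LevelTangent C (μ 2) p (φ 0 p v)) :=
  intersection_of_levels_is_almost_contact_submanifold_general C g φ ξ η h3 act μ hmom ζ₂ ζ₃
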